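/- arXiv:2006.00742 — 3 statements merged into one kernel-verified Lean document; each statement's English description precedes it below -/
import Mathlib

section
/- Let f : R^n → R be C³ on B(x⁰, Δ̄) with Hessian Lipschitz constant L. Let X = ⟨x⁰, x¹, …, xᵐ⟩ with dⁱ = xⁱ − x⁰, radius Δ = maxᵢ‖dⁱ‖ < Δ̄, all x⁰±dⁱ in the ball, and suppose S = [d¹ ⋯ dᵐ] has rank n (determined or overdetermined case). Define the generalized centred simplex gradient ∇ᶜf(X) = (Sᵀ)† δᶜ, where δᶜ has entries (f(x⁰+dⁱ)−f(x⁰−dⁱ))/2. Then ‖∇ᶜf(X) − ∇f(x⁰)‖ ≤ (L√m/6)‖(Ŝᵀ)†‖ Δ², where Ŝ = S/Δ. -/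
open Metric Matrix

/-- `B` is the Moore–Penrose pseudoinverse of `A`: the four Penrose equations. -/
def IsMPInv {n m : Type*} [Fintype n] [Fintype m]
    (A : Matrix n m ℝ) (B : Matrix m n ℝ) : Prop :=
  A * B * A = A ∧ B * A * B = B ∧ (A * B)ᵀ = A * B ∧ (B * A)ᵀ = B * A

/-- The ℓ²→ℓ² operator (spectral) norm of a real matrix. -/
noncomputable def opNorm {a b : ℕ} (A : Matrix (Fin a) (Fin b) ℝ) : ℝ :=
  ‖LinearMap.toContinuousLinearMap (Matrix.toEuclideanLin A)‖

open Set

/-!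
Along the line through `x₀` in direction `u`, `φ t = f (x₀ + t u) - f (x₀ - t u) - 2 t Df(x₀) u`
has `φ 0 = 0` and `φ' t = (Df (x₀ + t u) + Df (x₀ - t u) - 2 Df x₀) u`; this derivative
vanishes at `0` and its own derivative is bounded by `2 L ‖u‖³ t` because the Hessian is
`L`-Lipschitz. Integrating twice gives `|φ 1| ≤ L ‖u‖³ / 3`, so each centred difference
`δᶜᵢ` is within `L Δ³ / 6` of `∇f(x₀)·dⁱ = (Sᵀ ∇f(x₀))ᵢ`. Since `Sᵀ` is injective,
`(Sᵀ)† Sᵀ = 1`, hence `∇ᶜf(X) - ∇f(x₀) = (Sᵀ)† (δᶜ - Sᵀ ∇f(x₀))`, and the last vector has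
Euclidean norm at most `√m L Δ³ / 6`.
-/

theorem nonneg_of_norm_sub_le_mul_norm_sub {E F : Type*} [NormedAddCommGroup E]
    [NormedSpace ℝ E] [Nontrivial E] [SeminormedAddCommGroup F] {g : E → F} {x : E} {r L : ℝ}
    (hr : 0 < r) (hL : ∀ y ∈ ball x r, ∀ z ∈ ball x r, ‖g y - g z‖ ≤ L * ‖y - z‖) : 0 ≤ L := by
  obtain ⟨v, hv⟩ := exists_norm_eq E (half_pos hr).le
  have hxv : x + v ∈ ball x r := by simp [hv, hr]
  have h := (norm_nonneg _).trans (hL _ hxv x (mem_ball_self hr))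
  rw [add_sub_cancel_left, hv] at h
  exact nonneg_of_mul_nonneg_left h (half_pos hr)

namespace Matrix

variable {m n R : Type*} [Fintype n]

theorem mulVec_injective_of_rank_eq_card [Field R] {A : Matrix m n R}
    (h : A.rank = Fintype.card n) : Function.Injective A.mulVec := by
  have hker : Module.finrank R (LinearMap.ker A.mulVecLin) = 0 := by
    have := LinearMap.finrank_range_add_finrank_ker A.mulVecLin
    rw [← rank, h, Module.finrank_fintype_fun_eq_card] at this
    omega
  exact LinearMap.ker_eq_bot.mp (Submodule.finrank_eq_zero.mp hker)

theorem mul_eq_one_of_mul_mul_self [Fintype m] [CommRing R] [DecidableEq n] {A : Matrix m n R}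
    {B : Matrix n m R} (h : A * B * A = A) (hA : Function.Injective A.mulVec) : B * A = 1 := by
  refine mulVec_injective (funext fun v => hA ?_)
  simp only [mulVec_mulVec, ← Matrix.mul_assoc, h, Matrix.mul_one]

end Matrix

theorem opNorm_smul {a b : ℕ} (c : ℝ) (A : Matrix (Fin a) (Fin b) ℝ) :
    opNorm (c • A) = |c| * opNorm A := by
  rw [opNorm, opNorm, map_smul, map_smul, norm_smul, Real.norm_eq_abs]

theorem opNorm_eq_zero_of_subsingleton {a b : ℕ} [Subsingleton (EuclideanSpace ℝ (Fin a))]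
    (A : Matrix (Fin a) (Fin b) ℝ) : opNorm A = 0 := by
  rw [opNorm, Subsingleton.elim (LinearMap.toContinuousLinearMap _) 0, norm_zero]

theorem norm_mulVec_le_opNorm_mul {a b : ℕ} (A : Matrix (Fin a) (Fin b) ℝ) (v : Fin b → ℝ) :
    ‖(WithLp.equiv 2 (Fin a → ℝ)).symm (A *ᵥ v)‖ ≤
      opNorm A * ‖(WithLp.equiv 2 (Fin b → ℝ)).symm v‖ := by
  simpa [opNorm, Matrix.toLpLin_toLp] using
    (LinearMap.toContinuousLinearMap (Matrix.toEuclideanLin A)).le_opNorm (WithLp.toLp 2 v)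

theorem EuclideanSpace.norm_le_sqrt_card_mul {ι : Type*} [Fintype ι] {v : ι → ℝ} {c : ℝ}
    (hc : 0 ≤ c) (hv : ∀ i, |v i| ≤ c) :
    ‖(WithLp.equiv 2 (ι → ℝ)).symm v‖ ≤ √(Fintype.card ι) * c := by
  rw [EuclideanSpace.norm_eq, ← Real.sqrt_sq hc, ← Real.sqrt_mul (Nat.cast_nonneg _)]
  gcongr
  calc ∑ i, ‖v i‖ ^ 2 ≤ ∑ _i : ι, c ^ 2 := by
        gcongr with i; rw [Real.norm_eq_abs]; exact hv i
    _ = Fintype.card ι * c ^ 2 := by simp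

theorem norm_le_mul_pow_succ_div_of_norm_deriv_le {E : Type*} [NormedAddCommGroup E]
    [NormedSpace ℝ E] {φ φ' : ℝ → E} {C T : ℝ} {k : ℕ} (h0 : φ 0 = 0)
    (hφ : ∀ t ∈ Icc 0 T, HasDerivAt φ (φ' t) t) (hφ' : ∀ t ∈ Ico 0 T, ‖φ' t‖ ≤ C * t ^ k)
    {t : ℝ} (ht : t ∈ Icc 0 T) : ‖φ t‖ ≤ C * t ^ (k + 1) / (k + 1) := by
  have hB : ∀ s : ℝ, HasDerivAt (fun s => C * s ^ (k + 1) / (k + 1)) (C * s ^ k) s := by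
    intro s
    refine (((hasDerivAt_pow (k + 1) s).const_mul C).div_const ((k : ℝ) + 1)).congr_deriv ?_
    rw [Nat.add_sub_cancel]
    push_cast
    field_simp
  exact image_norm_le_of_norm_deriv_right_le_deriv_boundary
    (fun s hs => (hφ s hs).continuousAt.continuousWithinAt)
    (fun s hs => (hφ s (Ico_subset_Icc_self hs)).hasDerivWithinAt) (by simp [h0]) hB hφ' ht

section SymmetricDifference

variable {E F : Type*} [NormedAddCommGroup E] [NormedSpace ℝ E]
  [NormedAddCommGroup F] [NormedSpace ℝ F]

theorem norm_smul_lt_of_mem_Icc {u : E} {r s : ℝ} (hu : ‖u‖ < r) (hs : s ∈ Icc (0 : ℝ) 1) :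
    ‖s • u‖ < r := by
  rw [norm_smul, Real.norm_of_nonneg hs.1]
  nlinarith [norm_nonneg u, hs.2]

theorem HasFDerivAt.hasDerivAt_comp_add_smul {g : E → F} {g' : E →L[ℝ] F} {x u : E} {s : ℝ}
    (hg : HasFDerivAt g g' (x + s • u)) : HasDerivAt (fun s : ℝ => g (x + s • u)) (g' u) s := by
  have hline : HasDerivAt (fun s : ℝ => x + s • u) u s := by
    simpa using ((hasDerivAt_id s).smul_const u).const_add x
  exact hg.comp_hasDerivAt s hline

theorem HasFDerivAt.hasDerivAt_comp_sub_smul {g : E → F} {g' : E →L[ℝ] F} {x u : E} {s : ℝ}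
    (hg : HasFDerivAt g g' (x - s • u)) : HasDerivAt (fun s : ℝ => g (x - s • u)) (-g' u) s := by
  have hline : HasDerivAt (fun s : ℝ => x - s • u) (-u) s := by
    simpa using ((hasDerivAt_id s).smul_const u).const_sub x
  have := hg.comp_hasDerivAt s hline
  rwa [map_neg] at this

variable {r L : ℝ} {x u : E}

theorem norm_add_add_sub_two_smul_le {g : E → F} (hg : ContDiffOn ℝ 1 g (ball x r))
    (hL : ∀ y ∈ ball x r, ∀ z ∈ ball x r, ‖fderiv ℝ g y - fderiv ℝ g z‖ ≤ L * ‖y - z‖)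
    (hu : ‖u‖ < r) : ‖g (x + u) + g (x - u) - (2 : ℝ) • g x‖ ≤ L * ‖u‖ ^ 2 := by
  have hmem : ∀ s ∈ Icc (0 : ℝ) 1, x + s • u ∈ ball x r ∧ x - s • u ∈ ball x r := fun s hs => by
    simpa using norm_smul_lt_of_mem_Icc hu hs
  have hg' : ∀ y ∈ ball x r, HasFDerivAt g (fderiv ℝ g y) y := fun y hy =>
    ((hg.differentiableOn one_ne_zero).differentiableAt (isOpen_ball.mem_nhds hy)).hasFDerivAt
  have h := norm_le_mul_pow_succ_div_of_norm_deriv_le (k := 1) (C := 2 * L * ‖u‖ ^ 2)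
    (φ := fun s => g (x + s • u) + g (x - s • u) - (2 : ℝ) • g x)
    (φ' := fun s => fderiv ℝ g (x + s • u) u - fderiv ℝ g (x - s • u) u) (by simp [two_smul]) ?_ ?_
    (right_mem_Icc.2 zero_le_one)
  · norm_num at h
    exact h.trans_eq (by ring)
  · intro s hs
    simpa [sub_eq_add_neg] using (((hg' _ (hmem s hs).1).hasDerivAt_comp_add_smul).add
      ((hg' _ (hmem s hs).2).hasDerivAt_comp_sub_smul)).sub_const ((2 : ℝ) • g x)
  · intro s hs
    have hs' := Ico_subset_Icc_self hs
    calc ‖fderiv ℝ g (x + s • u) u - fderiv ℝ g (x - s • u) u‖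
        = ‖(fderiv ℝ g (x + s • u) - fderiv ℝ g (x - s • u)) u‖ := rfl
      _ ≤ ‖fderiv ℝ g (x + s • u) - fderiv ℝ g (x - s • u)‖ * ‖u‖ :=
        ContinuousLinearMap.le_opNorm _ _
      _ ≤ L * ‖x + s • u - (x - s • u)‖ * ‖u‖ := by
        gcongr
        exact hL _ (hmem s hs').1 _ (hmem s hs').2
      _ = 2 * L * ‖u‖ ^ 2 * s ^ 1 := by
        rw [show x + s • u - (x - s • u) = (2 * s) • u by module, norm_smul,
          Real.norm_of_nonneg (by linarith [hs.1])]
        ring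

theorem norm_sub_sub_two_smul_fderiv_le {f : E → F} (hf : ContDiffOn ℝ 2 f (ball x r))
    (hL : ∀ y ∈ ball x r, ∀ z ∈ ball x r,
      ‖fderiv ℝ (fderiv ℝ f) y - fderiv ℝ (fderiv ℝ f) z‖ ≤ L * ‖y - z‖)
    (hu : ‖u‖ < r) :
    ‖f (x + u) - f (x - u) - (2 : ℝ) • fderiv ℝ f x u‖ ≤ L * ‖u‖ ^ 3 / 3 := by
  have hmem : ∀ t ∈ Icc (0 : ℝ) 1, x + t • u ∈ ball x r ∧ x - t • u ∈ ball x r := fun t ht => by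
    simpa using norm_smul_lt_of_mem_Icc hu ht
  have hf' : ∀ y ∈ ball x r, HasFDerivAt f (fderiv ℝ f y) y := fun y hy =>
    ((hf.differentiableOn two_ne_zero).differentiableAt (isOpen_ball.mem_nhds hy)).hasFDerivAt
  have hD : ContDiffOn ℝ 1 (fderiv ℝ f) (ball x r) := hf.fderiv_of_isOpen isOpen_ball le_rfl
  have h := norm_le_mul_pow_succ_div_of_norm_deriv_le (k := 2) (C := L * ‖u‖ ^ 3)
    (φ := fun t => f (x + t • u) - f (x - t • u) - (2 * t) • fderiv ℝ f x u)
    (φ' := fun t => (fderiv ℝ f (x + t • u) + fderiv ℝ f (x - t • u) - (2 : ℝ) • fderiv ℝ f x) u)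
    (by simp) ?_ ?_ (right_mem_Icc.2 zero_le_one)
  · norm_num at h
    simpa using h
  · intro t ht
    have hlin :
        HasDerivAt (fun t : ℝ => (2 * t) • fderiv ℝ f x u) ((2 : ℝ) • fderiv ℝ f x u) t := by
      simpa using ((hasDerivAt_id t).const_mul (2 : ℝ)).smul_const (fderiv ℝ f x u)
    refine ((((hf' _ (hmem t ht).1).hasDerivAt_comp_add_smul).sub
      ((hf' _ (hmem t ht).2).hasDerivAt_comp_sub_smul)).sub hlin).congr_deriv ?_
    simp only [_root_.sub_apply, _root_.add_apply, _root_.smul_apply]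
    abel
  · intro t ht
    have ht' := Ico_subset_Icc_self ht
    calc ‖(fderiv ℝ f (x + t • u) + fderiv ℝ f (x - t • u) - (2 : ℝ) • fderiv ℝ f x) u‖
        ≤ ‖fderiv ℝ f (x + t • u) + fderiv ℝ f (x - t • u) - (2 : ℝ) • fderiv ℝ f x‖ * ‖u‖ :=
          ContinuousLinearMap.le_opNorm _ _
      _ ≤ L * ‖t • u‖ ^ 2 * ‖u‖ := by
          gcongr
          exact norm_add_add_sub_two_smul_le hD hL (norm_smul_lt_of_mem_Icc hu ht')
      _ = L * ‖u‖ ^ 3 * t ^ 2 := by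
          rw [norm_smul, Real.norm_of_nonneg ht.1]
          ring

end SymmetricDifference

theorem abs_sub_div_two_sub_fderiv_le {E : Type*} [NormedAddCommGroup E]
    [NormedSpace ℝ E] {f : E → ℝ} {x : E} {r L : ℝ} (hf : ContDiffOn ℝ 2 f (ball x r))
    (hL : ∀ y ∈ ball x r, ∀ z ∈ ball x r,
      ‖fderiv ℝ (fderiv ℝ f) y - fderiv ℝ (fderiv ℝ f) z‖ ≤ L * ‖y - z‖)
    {u : E} (hu : ‖u‖ < r) :
    |(f (x + u) - f (x - u)) / 2 - fderiv ℝ f x u| ≤ L * ‖u‖ ^ 3 / 6 := by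
  have h := norm_sub_sub_two_smul_fderiv_le hf hL hu
  rw [Real.norm_eq_abs, smul_eq_mul] at h
  rw [show (f (x + u) - f (x - u)) / 2 - fderiv ℝ f x u
      = (f (x + u) - f (x - u) - 2 * fderiv ℝ f x u) / 2 by ring, abs_div, abs_two]
  linarith

/-- GCSG error bound in the determined and overdetermined cases:
if `S = [d¹ ⋯ dᵐ]` has rank `n`, `P = (Sᵀ)†` and `∇ᶜf(X) = P δᶜ`, then
`‖∇ᶜf(X) − ∇f(x⁰)‖ ≤ (L√m/6)‖(Ŝᵀ)†‖Δ²` where `Ŝ = S/Δ` (so `(Ŝᵀ)† = Δ·P`). -/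
theorem gcsg_error_bound_overdetermined {n m : ℕ}
    (f : EuclideanSpace ℝ (Fin n) → ℝ)
    (x₀ : EuclideanSpace ℝ (Fin n)) (Δbar L Δ : ℝ)
    (hf : ContDiffOn ℝ 3 f (ball x₀ Δbar))
    (hL : ∀ x ∈ ball x₀ Δbar, ∀ y ∈ ball x₀ Δbar,
      ‖fderiv ℝ (fderiv ℝ f) x - fderiv ℝ (fderiv ℝ f) y‖ ≤ L * ‖x - y‖)
    (d : Fin m → EuclideanSpace ℝ (Fin n))
    (hΔ : ∀ i, ‖d i‖ ≤ Δ) (hΔpos : 0 < Δ) (hΔbar : Δ < Δbar)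
    (S : Matrix (Fin n) (Fin m) ℝ) (hS : S = Matrix.of fun j i => d i j)
    (hrank : S.rank = n)
    (P : Matrix (Fin n) (Fin m) ℝ) (hP : IsMPInv Sᵀ P) :
    ‖(WithLp.equiv 2 (Fin n → ℝ)).symm fun j =>
        P.mulVec (fun i => (f (x₀ + d i) - f (x₀ - d i)) / 2) j - gradient f x₀ j‖ ≤
      L * Real.sqrt m / 6 * opNorm (Δ • P) * Δ ^ 2 := by
  rcases subsingleton_or_nontrivial (EuclideanSpace ℝ (Fin n)) with hE | hE
  · simp [Subsingleton.elim _ (0 : EuclideanSpace ℝ (Fin n)), opNorm_eq_zero_of_subsingleton]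
  have hL0 : 0 ≤ L :=
    nonneg_of_norm_sub_le_mul_norm_sub (g := fderiv ℝ (fderiv ℝ f)) (hΔpos.trans hΔbar) hL
  have hPS : P * Sᵀ = 1 := Matrix.mul_eq_one_of_mul_mul_self hP.1
    (Matrix.mulVec_injective_of_rank_eq_card (by simpa using hrank))
  have hSgrad : ∀ i, (Sᵀ *ᵥ (gradient f x₀).ofLp) i = fderiv ℝ f x₀ (d i) := by
    intro i
    rw [← inner_gradient_left, PiLp.inner_apply]
    simp [Matrix.mulVec, dotProduct, hS]
  set e : Fin m → ℝ := fun i => (f (x₀ + d i) - f (x₀ - d i)) / 2 - fderiv ℝ f x₀ (d i)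
  have he : ∀ i, |e i| ≤ L * Δ ^ 3 / 6 := fun i =>
    (abs_sub_div_two_sub_fderiv_le (hf.of_le (by norm_num)) hL
      ((hΔ i).trans_lt hΔbar)).trans (by gcongr; exact hΔ i)
  have herr : (fun j => P.mulVec (fun i => (f (x₀ + d i) - f (x₀ - d i)) / 2) j
      - gradient f x₀ j) = P *ᵥ e := by
    have he' : e = (fun i => (f (x₀ + d i) - f (x₀ - d i)) / 2) - Sᵀ *ᵥ (gradient f x₀).ofLp :=
      funext fun i => by simp only [e, Pi.sub_apply, hSgrad]
    rw [he', mulVec_sub, mulVec_mulVec, hPS, one_mulVec]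
    rfl
  rw [herr, opNorm_smul, abs_of_pos hΔpos]
  calc _ ≤ opNorm P * ‖(WithLp.equiv 2 (Fin m → ℝ)).symm e‖ := norm_mulVec_le_opNorm_mul P e
    _ ≤ opNorm P * (√m * (L * Δ ^ 3 / 6)) := by
      gcongr
      · exact norm_nonneg _
      · simpa using EuclideanSpace.norm_le_sqrt_card_mul (by positivity) he
    _ = _ := by ring
end

section
/- Let f : R^n → R, and let X = ⟨x⁰, x⁰+d¹, …, x⁰+dᵐ⟩ with S = [d¹ ⋯ dᵐ] ∈ R^{n×m} having full row rank n. Let Y be the ordered set with directions d¹,…,dᵐ,−d¹,…,−dᵐ (reference point x⁰). Then the generalized simplex gradient of f over Y equals the generalized centred simplex gradient of f over X: (S(Y)ᵀ)† δˢ_f(Y) = (Sᵀ)† δᶜ_f(X). -/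
open Matrix

/-!
Stacking `Sᵀ` on `-Sᵀ` doubles the Gram matrix, so `½ [Q, -Q]` satisfies the four Penrose
equations for `[S, -S]ᵀ` whenever `Q = (Sᵀ)†`; by uniqueness it is `[S, -S]ᵀ†`. Applied to the
stacked forward and backward differences, the `f x₀` terms cancel and what is left is `Q` applied
to the centred differences.
-/

namespace IsMPInv

variable {n m : Type*} [Fintype n] [Fintype m]

theorem unique {A : Matrix n m ℝ} {B C : Matrix m n ℝ}
    (hB : IsMPInv A B) (hC : IsMPInv A C) : B = C := by
  obtain ⟨hB1, hB2, hB3, hB4⟩ := hB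
  obtain ⟨hC1, hC2, hC3, hC4⟩ := hC
  have hAB : A * B = A * C := by
    calc A * B = Bᵀ * Aᵀ := by rw [← hB3, transpose_mul]
    _ = Bᵀ * (A * C * A)ᵀ := by rw [hC1]
    _ = (Bᵀ * Aᵀ) * (Cᵀ * Aᵀ) := by simp only [transpose_mul, Matrix.mul_assoc]
    _ = (A * B) * (A * C) := by rw [← transpose_mul A B, ← transpose_mul A C, hB3, hC3]
    _ = A * C := by rw [← Matrix.mul_assoc, hB1]
  have hBA : B * A = C * A := by
    calc B * A = Aᵀ * Bᵀ := by rw [← hB4, transpose_mul]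
    _ = (A * C * A)ᵀ * Bᵀ := by rw [hC1]
    _ = (Aᵀ * Cᵀ) * (Aᵀ * Bᵀ) := by simp only [transpose_mul, Matrix.mul_assoc]
    _ = (C * A) * (B * A) := by rw [← transpose_mul C A, ← transpose_mul B A, hC4, hB4]
    _ = C * A := by rw [Matrix.mul_assoc, ← Matrix.mul_assoc A, hB1]
  calc B = B * A * B := hB2.symm
  _ = C * A * C := by rw [hBA, Matrix.mul_assoc, hAB, ← Matrix.mul_assoc]
  _ = C := hC2

theorem fromRows_neg {A : Matrix m n ℝ} {B : Matrix n m ℝ} (h : IsMPInv A B) :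
    IsMPInv (fromRows A (-A)) ((2⁻¹ : ℝ) • fromCols B (-B)) := by
  obtain ⟨h1, h2, h3, h4⟩ := h
  have hBA : (2⁻¹ : ℝ) • fromCols B (-B) * fromRows A (-A) = B * A := by
    rw [Matrix.smul_mul, fromCols_mul_fromRows, Matrix.neg_mul, Matrix.mul_neg, neg_neg,
      ← two_smul ℝ, smul_smul]
    norm_num
  refine ⟨?_, ?_, ?_, hBA ▸ h4⟩
  · rw [Matrix.mul_assoc, hBA, fromRows_mul, Matrix.neg_mul, ← Matrix.mul_assoc, h1]
  · rw [hBA, Matrix.mul_smul, mul_fromCols, Matrix.mul_neg, h2]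
  · simp only [Matrix.mul_smul, fromRows_mul_fromCols, transpose_smul, fromBlocks_transpose,
      Matrix.mul_neg, Matrix.neg_mul, transpose_neg, h3]

end IsMPInv

theorem Matrix.fromCols_neg_mulVec_sumElim {l m : Type*} [Fintype m]
    (B : Matrix l m ℝ) (u v : m → ℝ) :
    fromCols B (-B) *ᵥ Sum.elim u v = B *ᵥ (u - v) := by
  rw [fromCols_mulVec_sumElim, Matrix.neg_mulVec, mulVec_sub, sub_eq_add_neg]

theorem gsg_doubled_eq_gcsg_general {n m : ℕ}
    (f : EuclideanSpace ℝ (Fin n) → ℝ) (x₀ : EuclideanSpace ℝ (Fin n))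
    (d : Fin m → EuclideanSpace ℝ (Fin n))
    (S : Matrix (Fin n) (Fin m) ℝ)
    (P : Matrix (Fin n) (Fin m ⊕ Fin m) ℝ)
    (hP : IsMPInv (Matrix.fromCols S (-S))ᵀ P)
    (Q : Matrix (Fin n) (Fin m) ℝ) (hQ : IsMPInv Sᵀ Q) :
    P.mulVec
        (Sum.elim (fun i => f (x₀ + d i) - f x₀) fun i => f (x₀ - d i) - f x₀) =
      Q.mulVec fun i => (f (x₀ + d i) - f (x₀ - d i)) / 2 := by
  have hPQ : P = (2⁻¹ : ℝ) • fromCols Q (-Q) := by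
    rw [transpose_fromCols, transpose_neg] at hP
    exact hP.unique hQ.fromRows_neg
  rw [hPQ, smul_mulVec, fromCols_neg_mulVec_sumElim, ← mulVec_smul]
  congr 1
  funext i
  simp only [Pi.smul_apply, Pi.sub_apply, smul_eq_mul]
  ring

/-- For `S = [d¹ ⋯ dᵐ]` of full row rank `n`, the generalized simplex gradient over
`Y = ⟨x⁰, x⁰±d¹, …, x⁰±dᵐ⟩` equals the generalized centred simplex gradient over `X`:
`(S(Y)ᵀ)† δˢ_f(Y) = (Sᵀ)† δᶜ_f(X)`, where `S(Y) = [S −S]`. -/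
theorem gsg_doubled_eq_gcsg {n m : ℕ}
    (f : EuclideanSpace ℝ (Fin n) → ℝ) (x₀ : EuclideanSpace ℝ (Fin n))
    (d : Fin m → EuclideanSpace ℝ (Fin n))
    (S : Matrix (Fin n) (Fin m) ℝ) (hS : S = Matrix.of fun j i => d i j)
    (hrank : S.rank = n)
    (P : Matrix (Fin n) (Fin m ⊕ Fin m) ℝ)
    (hP : IsMPInv (Matrix.fromCols S (-S))ᵀ P)
    (Q : Matrix (Fin n) (Fin m) ℝ) (hQ : IsMPInv Sᵀ Q) :
    P.mulVec
        (Sum.elim (fun i => f (x₀ + d i) - f x₀) fun i => f (x₀ - d i) - f x₀) =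
      Q.mulVec fun i => (f (x₀ + d i) - f (x₀ - d i)) / 2 :=
  gsg_doubled_eq_gcsg_general f x₀ d S P hP Q hQ
end

section
/- The generalized centred simplex gradient equals the average of the generalized simplex gradients over X and over the reflected set X⁻: ∇ᶜf(X) = (1/2)(∇ˢf(X) + ∇ˢf(X⁻)). -/
open Matrix

theorem IsMPInv.unique_s12 {n m : Type*} [Fintype n] [Fintype m]
    {A : Matrix n m ℝ} {B C : Matrix m n ℝ}
    (hB : IsMPInv A B) (hC : IsMPInv A C) : B = C := by
  obtain ⟨hB1, hB2, hB3, hB4⟩ := hB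
  obtain ⟨hC1, hC2, hC3, hC4⟩ := hC
  have hAB : A * B = A * C := by
    calc A * B = (A * B)ᵀ := hB3.symm
    _ = Bᵀ * Aᵀ := by rw [transpose_mul]
    _ = Bᵀ * (A * C * A)ᵀ := by rw [hC1]
    _ = Bᵀ * (Aᵀ * (A * C)ᵀ) := by rw [transpose_mul]
    _ = (A * B)ᵀ * (A * C)ᵀ := by simp [Matrix.transpose_mul, Matrix.mul_assoc]
    _ = (A * B) * (A * C) := by rw [hB3, hC3]
    _ = (A * B * A) * C := by simp [Matrix.mul_assoc]
    _ = A * C := by rw [hB1]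
  have hBA : B * A = C * A := by
    calc B * A = (B * A)ᵀ := hB4.symm
    _ = Aᵀ * Bᵀ := by rw [transpose_mul]
    _ = (A * C * A)ᵀ * Bᵀ := by rw [hC1]
    _ = (C * A)ᵀ * Aᵀ * Bᵀ := by simp [Matrix.transpose_mul, Matrix.mul_assoc]
    _ = (C * A)ᵀ * (B * A)ᵀ := by simp [Matrix.transpose_mul, Matrix.mul_assoc]
    _ = (C * A) * (B * A) := by rw [hB4, hC4]
    _ = C * (A * B * A) := by simp [Matrix.mul_assoc]
    _ = C * A := by rw [hB1]
  calc B = B * A * B := hB2.symm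
  _ = B * (A * C) := by rw [Matrix.mul_assoc, hAB]
  _ = (C * A) * C := by rw [← Matrix.mul_assoc, hBA]
  _ = C := hC2

/-- The generalized centred simplex gradient is the average of the generalized simplex
gradients over `X` and over the reflected set `X⁻`:
`∇ᶜf(X) = (1/2)(∇ˢf(X) + ∇ˢf(X⁻))`, where `S(X⁻) = −S(X)`. -/
theorem gcsg_eq_average_of_gsg {n m : ℕ}
    (f : EuclideanSpace ℝ (Fin n) → ℝ) (x₀ : EuclideanSpace ℝ (Fin n))
    (d : Fin m → EuclideanSpace ℝ (Fin n))
    (S : Matrix (Fin n) (Fin m) ℝ) (hS : S = Matrix.of fun j i => d i j)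
    (P : Matrix (Fin n) (Fin m) ℝ) (hP : IsMPInv Sᵀ P)
    (P' : Matrix (Fin n) (Fin m) ℝ) (hP' : IsMPInv (-S)ᵀ P') :
    (P.mulVec fun i => (f (x₀ + d i) - f (x₀ - d i)) / 2) =
      (1 / 2 : ℝ) • (P.mulVec (fun i => f (x₀ + d i) - f x₀) +
        P'.mulVec fun i => f (x₀ - d i) - f x₀) := by
  have hnegP : IsMPInv (-S)ᵀ (-P) := by
    obtain ⟨h1, h2, h3, h4⟩ := hP
    rw [transpose_neg]
    refine ⟨?_, ?_, ?_, ?_⟩ <;>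
      simp only [Matrix.neg_mul, Matrix.mul_neg, neg_neg, transpose_neg, h1, h2, h3, h4]
  have hP'eq : P' = -P := hP'.unique_s12 hnegP
  subst hP'eq
  funext j
  simp only [Pi.smul_apply, Pi.add_apply, neg_mulVec, Pi.neg_apply, mulVec, dotProduct,
    smul_eq_mul]
  rw [← sub_eq_add_neg, ← Finset.sum_sub_distrib, Finset.mul_sum]
  congr 1; funext i
  ring
end
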